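/- Let n ∈ ℕ and let V ⊆ ℝ^n be a nonempty compact set. For every r ∈ ℕ, C_r^V ⊆ Q_r^V ⊆ COP(V); in particular every kernel in Q_r^V is copositive. -/

import Mathlib

noncomputable section

open Filter Topology

/-- The `r`-stack of a `d`-tensor `T`: `Stk^r(T)(u, w) = T(u)`. -/
def stk {α : Type*} (d r : ℕ) (T : (Fin d → α) → ℝ) : (Fin (d + r) → α) → ℝ :=
  fun v => T fun i => v (Fin.castAdd r i)

/-- The symmetrization of a `d`-tensor:
`σ(T)(v) = (1/d!) ∑_{π ∈ Sym(d)} T(v ∘ π)`. -/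
def tsym {α : Type*} (d : ℕ) (T : (Fin d → α) → ℝ) : (Fin d → α) → ℝ :=
  fun v => (d.factorial : ℝ)⁻¹ * ∑ π : Equiv.Perm (Fin d), T (v ∘ π)

/-- A symmetric two-variable function identified with a `2`-tensor. -/
def kerTensor {X : Type*} (K : X → X → ℝ) : (Fin 2 → X) → ℝ :=
  fun v => K (v 0) (v 1)

/-- A kernel: a continuous symmetric real-valued function of two variables. -/
def IsKernel {X : Type*} [TopologicalSpace X] (K : X → X → ℝ) : Prop :=
  Continuous (fun p : X × X => K p.1 p.2) ∧ ∀ x y, K x y = K y x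

/-- Positive semidefiniteness of a two-variable function. -/
def IsPSDKernel {X : Type*} (K : X → X → ℝ) : Prop :=
  ∀ (k : ℕ) (v : Fin k → X) (x : Fin k → ℝ),
    0 ≤ ∑ i, ∑ j, K (v i) (v j) * x i * x j

/-- Copositivity of a two-variable function. -/
def IsCopositiveKernel {X : Type*} (K : X → X → ℝ) : Prop :=
  ∀ (k : ℕ) (v : Fin k → X) (x : Fin k → ℝ), (∀ i, 0 ≤ x i) →
    0 ≤ ∑ i, ∑ j, K (v i) (v j) * x i * x j

/-- An `(r+2)`-tensor `S` is 2-PSD if it is continuous and every slice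
`(x, y) ↦ S(x, y, z)` is a PSD kernel. -/
def Is2PSD {X : Type*} [TopologicalSpace X] (r : ℕ)
    (S : (Fin (2 + r) → X) → ℝ) : Prop :=
  Continuous S ∧ ∀ z : Fin r → X, IsPSDKernel fun x y => S (Fin.append ![x, y] z)

/-- The tensor condition defining `C_r`: `σ(Stk^r M) = σ(N)` for some
nonnegative `(r+2)`-tensor `N`. -/
def CrCond {X : Type*} (r : ℕ) (M : X → X → ℝ) : Prop :=
  ∃ N : (Fin (2 + r) → X) → ℝ, (∀ v, 0 ≤ N v) ∧
    tsym (2 + r) (stk 2 r (kerTensor M)) = tsym (2 + r) N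

/-- Membership in `C_r`: a kernel satisfying the `C_r` tensor condition. -/
def memCr {X : Type*} [TopologicalSpace X] (r : ℕ) (M : X → X → ℝ) : Prop :=
  IsKernel M ∧ CrCond r M

/-- Membership in `Q_r`: a kernel `M` with `σ(Stk^r M) = σ(N) + σ(S)` for some
nonnegative `(r+2)`-tensor `N` and 2-PSD `(r+2)`-tensor `S`. -/
def memQr {X : Type*} [TopologicalSpace X] (r : ℕ) (M : X → X → ℝ) : Prop :=
  IsKernel M ∧ ∃ N S : (Fin (2 + r) → X) → ℝ, (∀ v, 0 ≤ N v) ∧ Is2PSD r S ∧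
    tsym (2 + r) (stk 2 r (kerTensor M)) =
      fun v => tsym (2 + r) N v + tsym (2 + r) S v

/-- The space of kernels on `V`, i.e. symmetric continuous functions on
`V × V`, with the topology of `C(V × V, ℝ)` (for `V` compact this is the
supremum-norm topology). -/
def KernelSpace {n : ℕ} (V : Set (Fin n → ℝ)) : Type _ :=
  {K : C(↥V × ↥V, ℝ) // ∀ x y, K (x, y) = K (y, x)}

instance {n : ℕ} (V : Set (Fin n → ℝ)) : TopologicalSpace (KernelSpace V) :=
  instTopologicalSpaceSubtype

/-- `COP(V)` as a subset of the space of kernels on `V`. -/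
def COPSet {n : ℕ} (V : Set (Fin n → ℝ)) : Set (KernelSpace V) :=
  {K | IsCopositiveKernel fun x y => K.1 (x, y)}

/-! Pair a `d`-tensor `T` with `x^{⊗d}` at the points `v`:
`⟪T⟫ = ∑_{f : Fin d → Fin k} (∏ₘ x_{f m}) T(v ∘ f)`. This pairing is linear and invariant under
symmetrization, it sends `Stk^r M` to `(xᵀ M x) (∑ᵢ xᵢ)^r`, and for `x ≥ 0` it is nonnegative on
nonnegative tensors and, slice by slice, on 2-PSD tensors. So for `M ∈ Q_r` the product
`(xᵀ M x) (∑ᵢ xᵢ)^r` is nonnegative, and either `∑ᵢ xᵢ > 0` or `x = 0`. -/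

lemma Fin.comp_append {α β : Type*} {m n : ℕ} (g : α → β) (u : Fin m → α) (w : Fin n → α) :
    g ∘ Fin.append u w = Fin.append (g ∘ u) (g ∘ w) := by
  ext i
  refine Fin.addCases (fun i => ?_) (fun i => ?_) i <;> simp

variable {X : Type*}

def tensorPairing (d : ℕ) {k : ℕ} (v : Fin k → X) (x : Fin k → ℝ) :
    ((Fin d → X) → ℝ) →ₗ[ℝ] ℝ :=
  ∑ f : Fin d → Fin k, (∏ m, x (f m)) • LinearMap.proj (v ∘ f)

section TensorPairing

variable {k : ℕ} (v : Fin k → X) (x : Fin k → ℝ)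

lemma tensorPairing_apply (d : ℕ) (T : (Fin d → X) → ℝ) :
    tensorPairing d v x T = ∑ f : Fin d → Fin k, (∏ m, x (f m)) * T (v ∘ f) := by
  simp [tensorPairing]

lemma tensorPairing_comp_perm {d : ℕ} (T : (Fin d → X) → ℝ) (π : Equiv.Perm (Fin d)) :
    tensorPairing d v x (fun w => T (w ∘ π)) = tensorPairing d v x T := by
  simp only [tensorPairing_apply]
  refine Fintype.sum_equiv (π.symm.arrowCongr (Equiv.refl _)) _ _ fun f => ?_
  congr 1
  exact (Equiv.prod_comp π fun m => x (f m)).symm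

lemma tsym_eq_smul_sum (d : ℕ) (T : (Fin d → X) → ℝ) :
    tsym d T = (d.factorial : ℝ)⁻¹ • ∑ π : Equiv.Perm (Fin d), fun w => T (w ∘ π) := by
  ext w
  simp [tsym, Finset.sum_apply]

lemma tensorPairing_tsym (d : ℕ) (T : (Fin d → X) → ℝ) :
    tensorPairing d v x (tsym d T) = tensorPairing d v x T := by
  simp only [tsym_eq_smul_sum, map_smul, map_sum, tensorPairing_comp_perm, Finset.sum_const,
    Finset.card_univ, Fintype.card_perm, Fintype.card_fin, nsmul_eq_mul, smul_eq_mul]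
  rw [← mul_assoc, inv_mul_cancel₀ (by positivity), one_mul]

lemma tensorPairing_nonneg (hx : ∀ i, 0 ≤ x i) {d : ℕ} {T : (Fin d → X) → ℝ}
    (hT : ∀ w, 0 ≤ T w) : 0 ≤ tensorPairing d v x T := by
  rw [tensorPairing_apply]
  exact Finset.sum_nonneg fun f _ => mul_nonneg (Finset.prod_nonneg fun m _ => hx _) (hT _)

lemma tensorPairing_append (d e : ℕ) (T : (Fin (d + e) → X) → ℝ) :
    tensorPairing (d + e) v x T = ∑ h : Fin e → Fin k,
      (∏ j, x (h j)) * tensorPairing d v x (fun u => T (Fin.append u (v ∘ h))) := by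
  simp only [tensorPairing_apply, Finset.mul_sum]
  rw [Finset.sum_comm, ← Fintype.sum_prod_type']
  refine (Fintype.sum_equiv (Fin.appendEquiv d e) _ _ fun p => ?_).symm
  simp only [Fin.appendEquiv, Equiv.coe_fn_mk, Fin.comp_append, Fin.prod_univ_add, Fin.append_left,
    Fin.append_right]
  ring

lemma tensorPairing_kerTensor (K : X → X → ℝ) :
    tensorPairing 2 v x (kerTensor K) = ∑ i, ∑ j, K (v i) (v j) * x i * x j := by
  rw [tensorPairing_apply, ← Fintype.sum_prod_type']
  refine Fintype.sum_equiv (finTwoArrowEquiv (Fin k)) _ _ fun g => ?_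
  simp [kerTensor, Fin.prod_univ_two]
  ring

lemma tensorPairing_stk (d r : ℕ) (T : (Fin d → X) → ℝ) :
    tensorPairing (d + r) v x (stk d r T) = tensorPairing d v x T * (∑ i, x i) ^ r := by
  have hstk : ∀ (w : Fin r → X), (fun u => stk d r T (Fin.append u w)) = T := fun w => by
    ext u
    simp [stk]
  simp only [tensorPairing_append, hstk, Fintype.sum_pow, Finset.mul_sum]
  exact Finset.sum_congr rfl fun h _ => mul_comm _ _

lemma tensorPairing_nonneg_of_is2PSD [TopologicalSpace X] (hx : ∀ i, 0 ≤ x i) {r : ℕ}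
    {S : (Fin (2 + r) → X) → ℝ} (hS : Is2PSD r S) : 0 ≤ tensorPairing (2 + r) v x S := by
  rw [tensorPairing_append]
  refine Finset.sum_nonneg fun h _ => mul_nonneg (Finset.prod_nonneg fun j _ => hx _) ?_
  have hslice : (fun u => S (Fin.append u (v ∘ h))) =
      kerTensor fun a b => S (Fin.append ![a, b] (v ∘ h)) := by
    ext u
    simp only [kerTensor]
    congr 2
    ext i
    fin_cases i <;> rfl
  rw [hslice, tensorPairing_kerTensor]
  exact hS.2 _ k v x

end TensorPairing

lemma tsym_zero (d : ℕ) : tsym d (0 : (Fin d → X) → ℝ) = 0 := by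
  ext w
  simp [tsym]

lemma memQr_of_memCr [TopologicalSpace X] {r : ℕ} {M : X → X → ℝ} (hM : memCr r M) :
    memQr r M := by
  obtain ⟨hK, N, hN, heq⟩ := hM
  refine ⟨hK, N, 0, hN, ⟨continuous_const, fun z k v x => by simp⟩, ?_⟩
  simp [heq, tsym_zero]

lemma isCopositiveKernel_of_memQr [TopologicalSpace X] {r : ℕ} {M : X → X → ℝ}
    (hM : memQr r M) : IsCopositiveKernel M := by
  obtain ⟨-, N, S, hN, hS, heq⟩ := hM
  intro k v x hx
  have hprod : 0 ≤ (∑ i, ∑ j, M (v i) (v j) * x i * x j) * (∑ i, x i) ^ r := by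
    have hpair := congrArg (tensorPairing (2 + r) v x) heq
    rw [tensorPairing_tsym, tensorPairing_stk, tensorPairing_kerTensor] at hpair
    rw [hpair, ← Pi.add_def, map_add, tensorPairing_tsym, tensorPairing_tsym]
    exact add_nonneg (tensorPairing_nonneg v x hx hN) (tensorPairing_nonneg_of_is2PSD v x hx hS)
  rcases (Finset.sum_nonneg fun i _ => hx i).eq_or_lt with hsum | hsum
  · have hzero : ∀ i, x i = 0 := fun i =>
      (Finset.sum_eq_zero_iff_of_nonneg fun i _ => hx i).mp hsum.symm i (Finset.mem_univ i)
    simp [hzero]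
  · exact nonneg_of_mul_nonneg_left hprod (pow_pos hsum r)

theorem stmt5_general (n : ℕ) (V : Set (Fin n → ℝ)) (r : ℕ) :
    (∀ M : ↥V → ↥V → ℝ, memCr r M → memQr r M) ∧
    (∀ M : ↥V → ↥V → ℝ, memQr r M → IsKernel M ∧ IsCopositiveKernel M) :=
  ⟨fun _ => memQr_of_memCr, fun _ hM => ⟨hM.1, isCopositiveKernel_of_memQr hM⟩⟩

/-- `C_r^V ⊆ Q_r^V ⊆ COP(V)`; in particular every kernel in
`Q_r^V` is copositive. -/
theorem stmt5 (n : ℕ) (V : Set (Fin n → ℝ)) (hVne : V.Nonempty)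
    (hVc : IsCompact V) (r : ℕ) :
    (∀ M : ↥V → ↥V → ℝ, memCr r M → memQr r M) ∧
    (∀ M : ↥V → ↥V → ℝ, memQr r M → IsKernel M ∧ IsCopositiveKernel M) :=
  stmt5_general n V r

end
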